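/- arXiv:0712.2112 — 4 statements merged into one kernel-verified Lean document; each statement's English description precedes it below -/
import Mathlib

section
/- For every nonempty perfect set P ⊆ ℝ there exists a Dirichlet set D ⊆ ℝ such that P + D = ℝ, i.e., every real is the sum of an element of P and an element of D. -/
open MeasureTheory Filter Set Pointwise

/-- Distance from a real number to the nearest integer. -/
noncomputable def nintDist (x : ℝ) : ℝ := |x - round x|

/-- `E` is a Dirichlet set. -/
def IsDirichlet (E : Set ℝ) : Prop :=
  ∃ n : ℕ → ℕ, StrictMono n ∧ ∀ x ∈ E, ∀ k : ℕ, nintDist (n k * x) ≤ (1/2) ^ k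

/-- `E` is a pseudo-Dirichlet set. -/
def IsPseudoDirichlet (E : Set ℝ) : Prop :=
  ∃ n : ℕ → ℕ, StrictMono n ∧ ∀ x ∈ E, ∀ᶠ k in atTop, nintDist (n k * x) ≤ (1/2) ^ k

/-- `E` is an Arbault set. -/
def IsArbault (E : Set ℝ) : Prop :=
  ∃ n : ℕ → ℕ, StrictMono n ∧ ∀ x ∈ E,
    Tendsto (fun k => nintDist (n k * x)) atTop (nhds 0)

/-- `E` is an N-set. -/
def IsNSet (E : Set ℝ) : Prop :=
  ∃ a : ℕ → ℝ, (∀ n, 0 ≤ a n) ∧ ¬ Summable a ∧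
    ∀ x ∈ E, Summable (fun n => a n * nintDist (n * x))

/-- `s` is an Fσ set: a countable union of closed sets. -/
def IsFsigma (s : Set ℝ) : Prop :=
  ∃ f : ℕ → Set ℝ, (∀ n, IsClosed (f n)) ∧ s = ⋃ n, f n

/-!
Replace `P` by a compact perfect subset `K`. Portions of `K` are uncountable, so in finitely many
of them one can pick points `x` with `1, x₁, …, xₙ` linearly independent over `ℚ`; Kronecker's
theorem then yields arbitrarily large `N` such that, near every point of `K`, the multiples `N * z`
(`z ∈ K`) are `ε`-dense modulo one. Kronecker's theorem is proved by averaging the nonnegative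
trigonometric polynomial `∏ᵢ cos ^ (2p) (π (n δᵢ - tᵢ))` over `n`: the averages tend to its
constant term `(C(2p, p) / 4 ^ p) ^ d`, whereas at every `n` with some `nδᵢ - tᵢ` at least `ε` away
from `ℤ` the polynomial is at most `cos ^ (2p) (π ε)`, which is smaller once `p` is large.

Choosing `N₀ < N₁ < ⋯` this way at scales `αₖ ≈ 2⁻ᵏ / Nₖ₋₁`, every `y` is approached by
`zₖ ∈ K` with `‖Nₖ (y - zₖ₊₁)‖ < 2⁻ᵏ⁻¹`; the limit `p ∈ K` moves `zₖ₊₁` by less than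
`2⁻ᵏ⁻² / Nₖ`, so `y - p` lies in the Dirichlet set `{x | ∀ k, ‖Nₖ x‖ ≤ 2⁻ᵏ}`.
-/

open scoped FourierTransform Real Topology

lemma nintDist_eq_norm (x : ℝ) : nintDist x = ‖(x : UnitAddCircle)‖ := UnitAddCircle.norm_eq.symm

lemma nintDist_le_half (x : ℝ) : nintDist x ≤ 1 / 2 := abs_sub_round x

lemma nintDist_le_abs_sub_intCast (x : ℝ) (m : ℤ) : nintDist x ≤ |x - m| := round_le x m

lemma nintDist_le_abs (x : ℝ) : nintDist x ≤ |x| := by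
  simpa using nintDist_le_abs_sub_intCast x 0

lemma nintDist_neg (x : ℝ) : nintDist (-x) = nintDist x := by
  simp only [nintDist_eq_norm, AddCircle.coe_neg, norm_neg]

lemma nintDist_sub_le (x y z : ℝ) : nintDist (x - z) ≤ nintDist (x - y) + nintDist (y - z) := by
  simp only [nintDist_eq_norm, AddCircle.coe_sub]
  exact norm_sub_le_norm_sub_add_norm_sub _ _ _

lemma nintDist_mul_sub_le {a : ℝ} (ha : 0 ≤ a) (y z p : ℝ) :
    nintDist (a * (y - p)) ≤ nintDist (a * z - a * y) + a * dist z p := by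
  calc nintDist (a * (y - p)) ≤ nintDist (a * y - a * z) + nintDist (a * z - a * p) := by
        rw [mul_sub]
        exact nintDist_sub_le _ _ _
    _ ≤ nintDist (a * z - a * y) + a * dist z p := by
        rw [← nintDist_neg (a * y - a * z), neg_sub, ← mul_sub (a := a) z p, Real.dist_eq]
        gcongr
        refine (nintDist_le_abs _).trans_eq ?_
        rw [abs_mul, abs_of_nonneg ha]

lemma cos_sq_le_of_le_nintDist {u ε : ℝ} (hε : 0 ≤ ε) (h : ε ≤ nintDist u) :
    Real.cos (π * u) ^ 2 ≤ Real.cos (π * ε) ^ 2 := by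
  have hu : Real.cos (π * u) ^ 2 = Real.cos (π * nintDist u) ^ 2 := by
    have h2π : 2 * (π * nintDist u) = |2 * (π * (u - round u))| := by
      rw [nintDist, abs_mul, abs_mul, abs_two, abs_of_pos Real.pi_pos]
    rw [Real.cos_sq, Real.cos_sq, h2π, Real.cos_abs, ← Real.cos_sub_int_mul_two_pi _ (round u)]
    ring_nf
  have h2 := nintDist_le_half u
  rw [hu]
  gcongr
  · exact Real.cos_nonneg_of_mem_Icc ⟨by nlinarith [Real.pi_pos], by nlinarith [Real.pi_pos]⟩
  · exact Real.cos_le_cos_of_nonneg_of_le_pi (by positivity) (by nlinarith [Real.pi_pos])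
      (by nlinarith [Real.pi_pos])

lemma fourierChar_eq_one_iff {x : ℝ} : (𝐞 x : ℂ) = 1 ↔ ∃ m : ℤ, x = m := by
  rw [Circle.coe_eq_one, Real.fourierChar_apply', Circle.exp_eq_one]
  refine exists_congr fun m => ⟨fun h => ?_, fun h => by rw [h]; ring⟩
  nlinarith [Real.pi_pos]

lemma fourierChar_natCast_mul (n : ℕ) (x : ℝ) : (𝐞 (n * x) : ℂ) = 𝐞 x ^ n := by
  rw [← nsmul_eq_mul, AddChar.map_nsmul_eq_pow, Circle.coe_pow]

lemma fourierChar_add (x y : ℝ) : (𝐞 (x + y) : ℂ) = 𝐞 x * 𝐞 y := by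
  rw [AddChar.map_add_eq_mul, Circle.coe_mul]

lemma fourierChar_sum {ι : Type*} (s : Finset ι) (f : ι → ℝ) :
    (𝐞 (∑ i ∈ s, f i) : ℂ) = ∏ i ∈ s, (𝐞 (f i) : ℂ) := by
  simp only [Real.fourierChar_apply, ← Complex.exp_sum, Finset.mul_sum]
  push_cast
  rw [Finset.sum_mul]

lemma two_mul_cos_pi_mul (u : ℝ) : (2 * Real.cos (π * u) : ℂ) = 𝐞 (u / 2) + 𝐞 (-(u / 2)) := by
  rw [Real.fourierChar_apply, Real.fourierChar_apply]
  push_cast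
  rw [Complex.cos]
  ring_nf

lemma four_pow_mul_cos_pow_eq_sum (p : ℕ) (u : ℝ) :
    ((4 ^ p * Real.cos (π * u) ^ (2 * p) : ℝ) : ℂ) =
      ∑ a ∈ Finset.range (2 * p + 1), ((2 * p).choose a : ℂ) * 𝐞 (((a : ℝ) - p) * u) := by
  have h4 : ((4 ^ p * Real.cos (π * u) ^ (2 * p) : ℝ) : ℂ) =
      (2 * Real.cos (π * u) : ℂ) ^ (2 * p) := by
    push_cast
    rw [mul_pow, pow_mul 2 2 p]
    norm_num
  rw [h4, two_mul_cos_pi_mul, add_pow]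
  refine Finset.sum_congr rfl fun a ha => ?_
  have ha' : a ≤ 2 * p := Nat.lt_succ_iff.mp (Finset.mem_range.mp ha)
  rw [← fourierChar_natCast_mul, ← fourierChar_natCast_mul, ← fourierChar_add, Nat.cast_sub ha']
  push_cast
  ring_nf

lemma tendsto_cesaro_pow {z : ℂ} (hz : ‖z‖ = 1) :
    Tendsto (fun N : ℕ => (N : ℂ)⁻¹ * ∑ n ∈ Finset.range N, z ^ n) atTop
      (𝓝 (if z = 1 then 1 else 0)) := by
  split_ifs with h1
  · refine tendsto_const_nhds.congr' ?_
    filter_upwards [eventually_ne_atTop 0] with N hN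
    simp [h1, hN]
  · have hz1 : 0 < ‖z - 1‖ := norm_pos_iff.mpr (sub_ne_zero.mpr h1)
    refine squeeze_zero_norm (a := fun N : ℕ => (N : ℝ)⁻¹ * (2 / ‖z - 1‖)) (fun N => ?_) ?_
    · rw [norm_mul, norm_inv, Complex.norm_natCast, geom_sum_eq h1, norm_div]
      gcongr
      calc ‖z ^ N - 1‖ ≤ ‖z ^ N‖ + ‖(1 : ℂ)‖ := norm_sub_le _ _
        _ = 2 := by rw [norm_pow, hz, one_pow, norm_one]; norm_num
    · simpa using (tendsto_inv_atTop_nhds_zero_nat (𝕜 := ℝ)).mul_const (2 / ‖z - 1‖)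

lemma tendsto_cesaro_sum_mul_pow {κ : Type*} (s : Finset κ) (c z : κ → ℂ)
    (hz : ∀ j, ‖z j‖ = 1) :
    Tendsto (fun N : ℕ => (N : ℂ)⁻¹ * ∑ n ∈ Finset.range N, ∑ j ∈ s, c j * z j ^ n) atTop
      (𝓝 (∑ j ∈ s with z j = 1, c j)) := by
  have h : ∀ N : ℕ, (N : ℂ)⁻¹ * ∑ n ∈ Finset.range N, ∑ j ∈ s, c j * z j ^ n =
      ∑ j ∈ s, c j * ((N : ℂ)⁻¹ * ∑ n ∈ Finset.range N, z j ^ n) := fun N => by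
    rw [Finset.sum_comm, Finset.mul_sum]
    refine Finset.sum_congr rfl fun j _ => ?_
    rw [← Finset.mul_sum]
    ring
  simp_rw [h, Finset.sum_filter]
  refine tendsto_finsetSum _ fun j _ => ?_
  simpa [mul_ite] using (tendsto_cesaro_pow (hz j)).const_mul (c j)

section Kronecker

variable {ι : Type*} [Fintype ι]

lemma prod_cos_pow_eq_sum [DecidableEq ι] (p n : ℕ) (δ t : ι → ℝ) :
    (((4 ^ p) ^ Fintype.card ι * ∏ i, Real.cos (π * (n * δ i - t i)) ^ (2 * p) : ℝ) : ℂ) =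
      ∑ J ∈ Fintype.piFinset fun _ => Finset.range (2 * p + 1),
        (∏ i, ((2 * p).choose (J i) : ℂ)) * 𝐞 (-∑ i, ((J i : ℝ) - p) * t i) *
          𝐞 (∑ i, ((J i : ℝ) - p) * δ i) ^ n := by
  rw [← Finset.card_univ, ← Finset.prod_const, ← Finset.prod_mul_distrib, Complex.ofReal_prod]
  simp_rw [four_pow_mul_cos_pow_eq_sum, Finset.prod_univ_sum]
  refine Finset.sum_congr rfl fun J _ => ?_
  rw [Finset.prod_mul_distrib, ← fourierChar_sum, ← fourierChar_natCast_mul, mul_assoc,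
    ← fourierChar_add, Finset.mul_sum, ← Finset.sum_neg_distrib, ← Finset.sum_add_distrib]
  congr 3
  exact Finset.sum_congr rfl fun i _ => by ring

/-- `1, x₁, …, xₙ` are linearly independent over `ℚ`. -/
def IndependentModOne (x : ι → ℝ) : Prop :=
  ∀ k : ι → ℤ, (∃ m : ℤ, ∑ i, (k i : ℝ) * x i = m) → k = 0

lemma IndependentModOne.fourierChar_sum_eq_one_iff {δ : ι → ℝ} (hδ : IndependentModOne δ)
    {p : ℕ} {J : ι → ℕ} : (𝐞 (∑ i, ((J i : ℝ) - p) * δ i) : ℂ) = 1 ↔ J = fun _ => p := by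
  rw [fourierChar_eq_one_iff]
  constructor
  · rintro ⟨m, hm⟩
    have hk := hδ (fun i => (J i : ℤ) - p) ⟨m, by push_cast; exact hm⟩
    funext i
    have := congrFun hk i
    simp only [Pi.zero_apply] at this
    omega
  · rintro rfl
    exact ⟨0, by simp⟩

lemma tendsto_cesaro_prod_cos_pow {δ : ι → ℝ} (hδ : IndependentModOne δ) (p : ℕ) (t : ι → ℝ) :
    Tendsto (fun N : ℕ => (N : ℝ)⁻¹ *
        ∑ n ∈ Finset.range N, ∏ i, Real.cos (π * (n * δ i - t i)) ^ (2 * p)) atTop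
      (𝓝 (((2 * p).choose p / 4 ^ p : ℝ) ^ Fintype.card ι)) := by
  classical
  set S := Fintype.piFinset fun _ : ι => Finset.range (2 * p + 1)
  -- by independence, only the constant term `J = (p, …, p)` survives the averaging
  have hdiag : {J ∈ S | (𝐞 (∑ i, ((J i : ℝ) - p) * δ i) : ℂ) = 1} = {fun _ => p} := by
    ext J
    simp only [Finset.mem_filter, Finset.mem_singleton, S, Fintype.mem_piFinset,
      Finset.mem_range, hδ.fourierChar_sum_eq_one_iff]
    exact ⟨And.right, fun h => ⟨fun i => by rw [h]; dsimp only; omega, h⟩⟩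
  have hlim := tendsto_cesaro_sum_mul_pow S
    (fun J => (∏ i, ((2 * p).choose (J i) : ℂ)) * 𝐞 (-∑ i, ((J i : ℝ) - p) * t i))
    (fun J => 𝐞 (∑ i, ((J i : ℝ) - p) * δ i)) fun J => Circle.norm_coe _
  rw [hdiag, Finset.sum_singleton] at hlim
  have hexp : ∀ n : ℕ, ∑ J ∈ S, (∏ i, ((2 * p).choose (J i) : ℂ)) *
      𝐞 (-∑ i, ((J i : ℝ) - p) * t i) * 𝐞 (∑ i, ((J i : ℝ) - p) * δ i) ^ n =
      (((4 ^ p) ^ Fintype.card ι * ∏ i, Real.cos (π * (n * δ i - t i)) ^ (2 * p) : ℝ) : ℂ) :=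
    fun n => (prod_cos_pow_eq_sum p n δ t).symm
  simp only [hexp, sub_self, zero_mul, Finset.sum_const_zero, neg_zero,
    AddChar.map_zero_eq_one, Circle.coe_one, mul_one, Finset.prod_const, Finset.card_univ] at hlim
  have hreal : Tendsto (fun N : ℕ => (4 ^ p) ^ Fintype.card ι * ((N : ℝ)⁻¹ *
      ∑ n ∈ Finset.range N, ∏ i, Real.cos (π * (n * δ i - t i)) ^ (2 * p))) atTop
      (𝓝 (((2 * p).choose p : ℝ) ^ Fintype.card ι)) := by
    rw [← tendsto_ofReal_iff]
    convert hlim using 2 with N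
    · push_cast
      rw [Finset.mul_sum, Finset.mul_sum, Finset.mul_sum]
      exact Finset.sum_congr rfl fun n _ => by ring
    · push_cast; rfl
  have h4 : (4 : ℝ) ^ p ≠ 0 := by positivity
  convert hreal.const_mul ((4 ^ p) ^ Fintype.card ι)⁻¹ using 2
  · field_simp
  · rw [div_pow, div_eq_inv_mul]

lemma prod_cos_pow_le_of_le_nintDist (p : ℕ) (u : ι → ℝ) {ε : ℝ} (hε : 0 ≤ ε) {i : ι}
    (hi : ε ≤ nintDist (u i)) :
    ∏ j, Real.cos (π * u j) ^ (2 * p) ≤ (Real.cos (π * ε) ^ 2) ^ p := by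
  classical
  simp_rw [pow_mul]
  calc ∏ j, (Real.cos (π * u j) ^ 2) ^ p ≤ ∏ j ∈ {i}, (Real.cos (π * u j) ^ 2) ^ p :=
        Finset.prod_le_prod_of_subset_of_le_one (Finset.subset_univ _)
          (fun j _ => by positivity) fun j _ _ => pow_le_one₀ (by positivity) (Real.cos_sq_le_one _)
    _ ≤ (Real.cos (π * ε) ^ 2) ^ p := by
        rw [Finset.prod_singleton]
        exact pow_le_pow_left₀ (by positivity) (cos_sq_le_of_le_nintDist hε hi) p

lemma exists_pow_mul_pow_lt_one (M : ℕ) {ρ : ℝ} (hρ₀ : 0 ≤ ρ) (hρ₁ : ρ < 1) :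
    ∃ p : ℕ, ((2 * p + 1 : ℕ) : ℝ) ^ M * ρ ^ p < 1 := by
  have hlim := (tendsto_pow_const_mul_const_pow_of_abs_lt_one M
    (by rwa [abs_of_nonneg hρ₀] : |ρ| < 1)).const_mul ((3 : ℝ) ^ M)
  rw [mul_zero] at hlim
  obtain ⟨p, hp⟩ := ((hlim.eventually (gt_mem_nhds one_pos)).and (eventually_ge_atTop 1)).exists
  refine ⟨p, lt_of_le_of_lt ?_ hp.1⟩
  rw [← mul_assoc, ← mul_pow]
  gcongr
  have : (1 : ℝ) ≤ p := by exact_mod_cast hp.2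
  push_cast
  linarith

/-- Kronecker's theorem. -/
theorem IndependentModOne.exists_nintDist_sub_lt {δ : ι → ℝ} (hδ : IndependentModOne δ)
    (t : ι → ℝ) {ε : ℝ} (hε : 0 < ε) (N₀ : ℕ) :
    ∃ n ≥ N₀, ∀ i, nintDist (n * δ i - t i) < ε := by
  by_contra! hfar
  have hε₂ : ε ≤ 1 / 2 := by
    obtain ⟨i, hi⟩ := hfar N₀ le_rfl
    exact hi.trans (nintDist_le_half _)
  set ρ := Real.cos (π * ε) ^ 2
  have hcos₀ : 0 ≤ Real.cos (π * ε) :=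
    Real.cos_nonneg_of_mem_Icc ⟨by nlinarith [Real.pi_pos], by nlinarith [Real.pi_pos]⟩
  have hcos₁ : Real.cos (π * ε) < 1 := by
    simpa using Real.cos_lt_cos_of_nonneg_of_le_pi_div_two le_rfl
      (by nlinarith [Real.pi_pos]) (by positivity : 0 < π * ε)
  obtain ⟨p, hp⟩ := exists_pow_mul_pow_lt_one (Fintype.card ι) (sq_nonneg _)
    (pow_lt_one₀ hcos₀ hcos₁ two_ne_zero : ρ < 1)
  have hfar' : ∀ n : ℕ, ∏ i, Real.cos (π * (n * δ i - t i)) ^ (2 * p) ≤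
      if n < N₀ then 1 else ρ ^ p := fun n => by
    split_ifs with hn
    · exact Finset.prod_le_one (fun _ _ => (even_two_mul p).pow_nonneg _)
        fun _ _ => by rw [pow_mul]; exact pow_le_one₀ (sq_nonneg _) (Real.cos_sq_le_one _)
    · obtain ⟨i, hi⟩ := hfar n (not_lt.mp hn)
      exact prod_cos_pow_le_of_le_nintDist p _ hε.le hi
  have hbound : Tendsto (fun n : ℕ => if n < N₀ then 1 else ρ ^ p) atTop (𝓝 (ρ ^ p)) := by
    refine tendsto_const_nhds.congr' ?_
    filter_upwards [eventually_ge_atTop N₀] with n hn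
    simp [not_lt.mpr hn]
  have hmean : ((2 * p).choose p / 4 ^ p : ℝ) ^ Fintype.card ι ≤ ρ ^ p :=
    le_of_tendsto_of_tendsto' (tendsto_cesaro_prod_cos_pow hδ p t) hbound.cesaro fun N => by
      gcongr with n
      exact hfar' n
  have hbinom : (1 : ℝ) ≤ ((2 * p + 1 : ℕ) : ℝ) * ((2 * p).choose p / 4 ^ p) := by
    rw [← mul_div_assoc, one_le_div (by positivity)]
    exact_mod_cast Nat.four_pow_le_two_mul_add_one_mul_central_binom p
  have := mul_le_mul_of_nonneg_left hmean
    (by positivity : (0 : ℝ) ≤ ((2 * p + 1 : ℕ) : ℝ) ^ Fintype.card ι)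
  rw [← mul_pow] at this
  linarith [one_le_pow₀ hbinom (n := Fintype.card ι)]

lemma exists_independentModOne_of_not_countable (U : ι → Set ℝ)
    (hU : ∀ i, ¬ (U i).Countable) : ∃ x : ι → ℝ, (∀ i, x i ∈ U i) ∧ IndependentModOne x := by
  revert U
  refine Fintype.induction_empty_option (P := fun ι _ => ∀ U : ι → Set ℝ, (∀ i, ¬ (U i).Countable) →
    ∃ x : ι → ℝ, (∀ i, x i ∈ U i) ∧ IndependentModOne x) ?_ ?_ ?_ ι
  · intro α β _ e ih U hU
    let _ : Fintype α := Fintype.ofEquiv β e.symm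
    obtain ⟨x, hxU, hx⟩ := ih (U ∘ e) fun i => hU _
    refine ⟨x ∘ e.symm, fun i => by simpa using hxU (e.symm i), fun k ⟨m, hm⟩ => ?_⟩
    have := hx (k ∘ e) ⟨m, by rw [← hm, ← e.sum_comp]; simp⟩
    funext b
    simpa using congrFun this (e.symm b)
  · exact fun U _ => ⟨fun i => i.elim, fun i => i.elim, fun k _ => funext fun i => i.elim⟩
  · intro α _ ih U hU
    obtain ⟨x, hxU, hx⟩ := ih (fun i => U (some i)) fun i => hU _
    have hS : (range fun q : (α → ℤ) × ℤ × ℤ =>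
        (q.2.1 - ∑ i, (q.1 i : ℝ) * x i) / q.2.2).Countable := countable_range _
    obtain ⟨y, hyU, hyS⟩ := not_subset.mp fun h => hU none (hS.mono h)
    refine ⟨fun o => o.elim y x, fun o => by cases o <;> simp [hyU, hxU], fun k ⟨m, hm⟩ => ?_⟩
    rw [Fintype.sum_option] at hm
    have hnone : k none = 0 := by
      by_contra h
      refine hyS ⟨(fun i => k (some i), m, k none), ?_⟩
      simp only [Option.elim] at hm ⊢
      rw [div_eq_iff (by exact_mod_cast h)]
      linarith
    have := hx (fun i => k (some i)) ⟨m, by simpa [hnone] using hm⟩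
    funext o
    cases o with
    | none => exact hnone
    | some i => exact congrFun this i

end Kronecker

lemma exists_lt_nintDist_div_sub_lt {m : ℕ} (hm : 0 < m) (θ : ℝ) :
    ∃ j < m, nintDist ((j : ℝ) / m - θ) < 1 / m := by
  have hm₀ : (0 : ℝ) < m := by exact_mod_cast hm
  set j := ⌊Int.fract θ * m⌋₊
  have h₁ : (j : ℝ) ≤ Int.fract θ * m := Nat.floor_le (by positivity)
  have h₂ : Int.fract θ * m < j + 1 := Nat.lt_floor_add_one _
  refine ⟨j, (Nat.floor_lt (by positivity)).mpr (by nlinarith [Int.fract_lt_one θ]), ?_⟩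
  have heq : (j : ℝ) / m - θ - ((-⌊θ⌋ : ℤ) : ℝ) = -((Int.fract θ * m - j) / m) := by
    rw [Int.fract]
    push_cast
    field_simp
    ring
  calc nintDist ((j : ℝ) / m - θ) ≤ (Int.fract θ * m - j) / m := by
        refine (nintDist_le_abs_sub_intCast _ (-⌊θ⌋)).trans_eq ?_
        rw [heq, abs_neg, abs_of_nonneg (div_nonneg (by linarith) hm₀.le)]
    _ < 1 / m := by gcongr; linarith

theorem exists_nat_forall_exists_mem_nintDist_lt {ι : Type*} [Finite ι] (U : ι → Set ℝ)
    (hU : ∀ i, ¬ (U i).Countable) {ε : ℝ} (hε : 0 < ε) (N₀ : ℕ) :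
    ∃ N > N₀, ∀ i, ∀ θ : ℝ, ∃ z ∈ U i, nintDist (N * z - θ) < ε := by
  have := Fintype.ofFinite ι
  obtain ⟨m', hm'⟩ := exists_nat_one_div_lt (half_pos hε)
  set m := m' + 1
  have hm : 1 / (m : ℝ) < ε / 2 := by simpa [m] using hm'
  obtain ⟨x, hxU, hx⟩ :=
    exists_independentModOne_of_not_countable (fun a : ι × Fin m => U a.1) fun a => hU a.1
  obtain ⟨N, hN, hNx⟩ := hx.exists_nintDist_sub_lt (fun a => (a.2 : ℝ) / m) (half_pos hε) (N₀ + 1)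
  refine ⟨N, hN, fun i θ => ?_⟩
  obtain ⟨j, hjm, hθj⟩ := exists_lt_nintDist_div_sub_lt m'.succ_pos θ
  refine ⟨x (i, ⟨j, hjm⟩), hxU (i, ⟨j, hjm⟩), ?_⟩
  calc nintDist (N * x (i, ⟨j, hjm⟩) - θ)
      ≤ nintDist (N * x (i, ⟨j, hjm⟩) - (j : ℝ) / m) + nintDist ((j : ℝ) / m - θ) :=
        nintDist_sub_le _ _ _
    _ < ε / 2 + ε / 2 := add_lt_add (hNx (i, ⟨j, hjm⟩)) (hθj.trans hm)
    _ = ε := add_halves ε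

theorem Perfect.not_countable {α : Type*} [MetricSpace α] [CompleteSpace α] {C : Set α}
    (hC : Perfect C) (hne : C.Nonempty) : ¬ C.Countable := by
  obtain ⟨f, hfC, -, hf⟩ := hC.exists_nat_bool_injection hne
  have : Uncountable (ℕ → Bool) := by
    rw [← Cardinal.aleph0_lt_mk_iff, Cardinal.mk_arrow]
    simpa using Cardinal.aleph0_lt_continuum
  intro h
  exact _root_.not_countable (Set.countable_univ_iff.mp (by simpa using (h.mono hfC).preimage hf))

theorem Perfect.not_countable_inter_ball {α : Type*} [MetricSpace α] [CompleteSpace α]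
    {C : Set α} (hC : Perfect C) {x : α} (hx : x ∈ C) {r : ℝ} (hr : 0 < r) :
    ¬ (C ∩ Metric.ball x r).Countable := by
  obtain ⟨hperf, hne⟩ :=
    hC.closure_nhds_inter x hx (Metric.mem_ball_self (half_pos hr)) Metric.isOpen_ball
  refine fun h => hperf.not_countable hne (h.mono (subset_inter ?_ ?_))
  · exact closure_minimal inter_subset_right hC.closed
  · exact (closure_mono inter_subset_left).trans <| Metric.closure_ball_subset_closedBall.trans
      (Metric.closedBall_subset_ball (half_lt_self hr))

theorem Perfect.exists_isCompact_perfect_subset {α : Type*} [MetricSpace α] [ProperSpace α]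
    {P : Set α} (hP : Perfect P) (hne : P.Nonempty) :
    ∃ K ⊆ P, IsCompact K ∧ Perfect K ∧ K.Nonempty := by
  obtain ⟨x, hx⟩ := hne
  obtain ⟨hK, hKne⟩ := hP.closure_nhds_inter x hx (Metric.mem_ball_self one_pos) Metric.isOpen_ball
  refine ⟨_, closure_minimal inter_subset_right hP.closed, ?_, hK, hKne⟩
  exact (isCompact_closedBall x 1).of_isClosed_subset isClosed_closure
    (closure_minimal (inter_subset_left.trans Metric.ball_subset_closedBall)
      Metric.isClosed_closedBall)

def MulDenseModOne (K : Set ℝ) (N : ℕ) (α ε : ℝ) : Prop :=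
  ∀ q ∈ K, ∀ θ : ℝ, ∃ z ∈ K, dist z q < α ∧ nintDist (N * z - θ) < ε

theorem IsCompact.exists_mulDenseModOne {K : Set ℝ} (hK : IsCompact K) (hKp : Perfect K)
    {α ε : ℝ} (hα : 0 < α) (hε : 0 < ε) (N₀ : ℕ) : ∃ N > N₀, MulDenseModOne K N α ε := by
  obtain ⟨t, htK, htfin, hcover⟩ := hK.finite_cover_balls (half_pos hα)
  have := htfin.to_subtype
  obtain ⟨N, hN, hNz⟩ := exists_nat_forall_exists_mem_nintDist_lt
    (fun c : t => K ∩ Metric.ball (c : ℝ) (α / 2))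
    (fun c => hKp.not_countable_inter_ball (htK c.2) (half_pos hα)) hε N₀
  refine ⟨N, hN, fun q hq θ => ?_⟩
  obtain ⟨c, hct, hqc⟩ := mem_iUnion₂.mp (hcover hq)
  obtain ⟨z, ⟨hzK, hzc⟩, hz⟩ := hNz ⟨c, hct⟩ θ
  refine ⟨z, hzK, (dist_triangle_right z q c).trans_lt ?_, hz⟩
  linarith [Metric.mem_ball.mp hzc, Metric.mem_ball.mp hqc]

theorem exists_mem_forall_nintDist_le {K : Set ℝ} (hK : IsClosed K) {q₀ : ℝ} (hq₀ : q₀ ∈ K)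
    {M : ℕ → ℕ} (hM : Monotone M)
    (hdense : ∀ k, MulDenseModOne K (M (k + 1)) ((1 / 2) ^ (k + 2) / (M k + 1)) ((1 / 2) ^ (k + 1)))
    (y : ℝ) : ∃ p ∈ K, ∀ k, nintDist (M (k + 1) * (y - p)) ≤ (1 / 2) ^ k := by
  set d : ℕ → ℝ := fun k => (1 / 2) ^ (k + 2) / (M k + 1)
  have hnext : ∀ k (q : K), ∃ z : K, dist (z : ℝ) q < d k ∧
      nintDist (M (k + 1) * (z : ℝ) - M (k + 1) * y) < (1 / 2) ^ (k + 1) := fun k q => by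
    obtain ⟨z, hzK, hz⟩ := hdense k q q.2 (M (k + 1) * y)
    exact ⟨⟨z, hzK⟩, hz⟩
  choose next hnext using hnext
  let z : ℕ → K := fun k => Nat.rec (motive := fun _ => K) ⟨q₀, hq₀⟩ next k
  have hdist : ∀ k, dist (z k : ℝ) (z (k + 1)) ≤ d k := fun k => by
    rw [dist_comm]
    exact (hnext k (z k)).1.le
  have hd : Summable d := by
    refine Summable.of_nonneg_of_le (fun k => by positivity) (fun k => ?_)
      ((summable_geometric_two).mul_left ((1 / 2) ^ 2))
    rw [← mul_comm, ← pow_add]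
    exact div_le_self (by positivity) (by simp)
  obtain ⟨p, hp⟩ := cauchySeq_tendsto_of_complete (cauchySeq_of_dist_le_of_summable d hdist hd)
  refine ⟨p, hK.mem_of_tendsto hp (.of_forall fun k => (z k).2), fun k => ?_⟩
  have htail : dist (z (k + 1) : ℝ) p ≤ (1 / 2) ^ (k + 2) / (M (k + 1) + 1) := by
    refine (dist_le_tsum_of_dist_le_of_tendsto d hdist hd hp (k + 1)).trans ?_
    calc ∑' m, d (k + 1 + m) ≤ ∑' m, (1 / 2 : ℝ) ^ (k + 3) / (M (k + 1) + 1) * (1 / 2) ^ m := by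
          refine Summable.tsum_le_tsum (fun m => ?_) (hd.comp_injective (add_right_injective _))
            ((summable_geometric_two).mul_left _)
          rw [div_mul_eq_mul_div, ← pow_add]
          simp only [d]
          rw [show k + 1 + m + 2 = k + 3 + m by ring]
          gcongr
          exact hM le_self_add
      _ = (1 / 2 : ℝ) ^ (k + 2) / (M (k + 1) + 1) := by
          rw [tsum_mul_left, tsum_geometric_two]
          ring
  have hM₀ : (0 : ℝ) ≤ M (k + 1) := Nat.cast_nonneg _
  calc nintDist (M (k + 1) * (y - p))
      ≤ nintDist (M (k + 1) * (z (k + 1) : ℝ) - M (k + 1) * y) +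
          M (k + 1) * dist (z (k + 1) : ℝ) p := nintDist_mul_sub_le hM₀ _ _ _
    _ ≤ (1 / 2) ^ (k + 1) + M (k + 1) * ((1 / 2) ^ (k + 2) / (M (k + 1) + 1)) := by
        gcongr
        exact (hnext k (z k)).2.le
    _ ≤ (1 / 2) ^ (k + 1) + (1 / 2) ^ (k + 2) := by
        gcongr
        rw [mul_div_left_comm]
        exact mul_le_of_le_one_right (by positivity)
          ((div_le_one (by positivity)).mpr (by linarith))
    _ ≤ (1 / 2) ^ k := by
        rw [pow_add, pow_add]
        nlinarith [pow_pos (by norm_num : (0 : ℝ) < 1 / 2) k]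

theorem IsCompact.exists_isDirichlet_add_eq_univ {K : Set ℝ} (hK : IsCompact K)
    (hKp : Perfect K) (hne : K.Nonempty) : ∃ D : Set ℝ, IsDirichlet D ∧ K + D = univ := by
  choose f hf_gt hf using fun (k N₀ : ℕ) => hK.exists_mulDenseModOne hKp
    (by positivity : (0 : ℝ) < (1 / 2) ^ (k + 2) / (N₀ + 1))
    (by positivity : (0 : ℝ) < (1 / 2) ^ (k + 1)) N₀
  let M : ℕ → ℕ := fun k => Nat.rec 0 f k
  have hM : StrictMono M := strictMono_nat_of_lt_succ fun k => hf_gt k (M k)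
  obtain ⟨q₀, hq₀⟩ := hne
  refine ⟨{x | ∀ k, nintDist (M (k + 1) * x) ≤ (1 / 2) ^ k},
    ⟨fun k => M (k + 1), fun _ _ h => hM (Nat.succ_lt_succ h), fun x hx => hx⟩,
    eq_univ_of_forall fun y => ?_⟩
  obtain ⟨p, hpK, hp⟩ :=
    exists_mem_forall_nintDist_le hK.isClosed hq₀ hM.monotone (fun k => hf k (M k)) y
  exact ⟨p, hpK, y - p, hp, add_sub_cancel p y⟩

theorem stmt0 (P : Set ℝ) (hP : Perfect P) (hne : P.Nonempty) :
    ∃ D : Set ℝ, IsDirichlet D ∧ P + D = Set.univ := by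
  obtain ⟨K, hKP, hK, hKp, hKne⟩ := hP.exists_isCompact_perfect_subset hne
  obtain ⟨D, hD, hKD⟩ := hK.exists_isDirichlet_add_eq_univ hKp hKne
  exact ⟨D, hD, eq_univ_of_univ_subset (hKD ▸ add_subset_add_right hKP)⟩
end

section
/- Every N-set has Lebesgue measure zero. -/
/-!
If `∑ aₙ ‖n x‖ < ∞` on a set `E` of positive measure, then on some set `A` of positive finite
measure the sum is bounded, so `∑ aₙ ∫_A ‖n x‖ dx < ∞`. But `‖y‖ ≥ (1 - cos 2πy) / π²`, and by
the Riemann–Lebesgue lemma `∫_A cos (2π n x) dx → 0`, so `∫_A ‖n x‖ dx ≥ |A| / (2π²)` for all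
large `n`; hence `∑ aₙ = ∞` forces `∑ aₙ ∫_A ‖n x‖ dx = ∞`.
-/

open MeasureTheory Filter Set

open Real Topology
open scoped ENNReal FourierTransform

lemma measurable_nintDist : Measurable nintDist := by
  have hround : Measurable fun x : ℝ => ((round x : ℤ) : ℝ) := by
    simp_rw [round_eq]
    exact measurable_from_top.comp (measurable_id.add_const _).floor
  exact (measurable_id.sub hround).abs

lemma one_sub_cos_two_pi_mul_le (x : ℝ) : 1 - cos (2 * π * x) ≤ π ^ 2 * nintDist x := by
  have hcos : cos (2 * π * x) = cos (2 * π * (x - round x)) := by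
    rw [← cos_sub_int_mul_two_pi _ (round x)]
    ring_nf
  have hquad := one_sub_sq_div_two_le_cos (x := 2 * π * (x - round x))
  have hhalf : |x - round x| ≤ 1 / 2 := abs_sub_round x
  have hsq : (x - round x) ^ 2 ≤ |x - round x| / 2 := by
    rw [← sq_abs]; nlinarith [abs_nonneg (x - round x)]
  rw [hcos, nintDist]
  nlinarith [sq_nonneg π]

theorem Real.tendsto_integral_mul_cos_cocompact {f : ℝ → ℝ} (hf : Integrable f) :
    Tendsto (fun w : ℝ => ∫ v, f v * cos (2 * π * (v * w))) (cocompact ℝ) (𝓝 0) := by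
  have hRL := (Complex.continuous_re.tendsto 0).comp
    (Real.tendsto_integral_exp_smul_cocompact fun v => (f v : ℂ))
  rw [Complex.zero_re] at hRL
  refine hRL.congr fun w => ?_
  have hint : Integrable (fun v : ℝ => 𝐞 (-(v * w)) • (f v : ℂ)) := by
    refine (hf.ofReal (𝕜 := ℂ)).mono ?_ (ae_of_all _ fun v => by simp)
    exact (by fun_prop : Continuous fun v : ℝ => 𝐞 (-(v * w))).aestronglyMeasurable.smul
      hf.ofReal.aestronglyMeasurable
  simp only [Function.comp_apply]
  rw [← RCLike.re_to_complex, ← integral_re hint]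
  congr 1 with v
  simp [Circle.smul_def, Real.fourierChar_apply, Complex.exp_re, mul_comm]

lemma eventually_le_setLIntegral_nintDist_nat_mul {A : Set ℝ} (hA : MeasurableSet A)
    (hA_top : volume A ≠ ⊤) :
    ∀ᶠ n : ℕ in atTop, ENNReal.ofReal (volume.real A / (2 * π ^ 2)) ≤
      ∫⁻ x in A, ENNReal.ofReal (nintDist (n * x)) := by
  have : IsFiniteMeasure (volume.restrict A) := isFiniteMeasure_restrict.2 hA_top
  have hcos_int (n : ℕ) : IntegrableOn (fun x : ℝ => cos (2 * π * (n * x))) A :=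
    (integrable_const 1).mono' (by fun_prop) (ae_of_all _ fun x => by simp [abs_cos_le_one])
  have hRL : Tendsto (fun n : ℕ => ∫ x in A, cos (2 * π * (n * x))) atTop (𝓝 0) := by
    have hind : Integrable (A.indicator 1 : ℝ → ℝ) :=
      (integrable_indicator_iff hA).2 (integrable_const 1)
    refine ((tendsto_integral_mul_cos_cocompact hind).comp
      (tendsto_natCast_atTop_atTop.mono_right atTop_le_cocompact)).congr fun n => ?_
    rw [Function.comp_apply, ← integral_indicator hA]
    congr 1 with v
    by_cases hv : v ∈ A <;> simp [hv, mul_comm v]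
  rcases (measureReal_nonneg (μ := volume) (s := A)).eq_or_lt with hA₀ | hA₀
  · simp [← hA₀]
  filter_upwards [hRL.eventually_le_const (half_pos hA₀)] with n hn
  have hint : ∫ x in A, (1 - cos (2 * π * (n * x))) / π ^ 2 =
      (volume.real A - ∫ x in A, cos (2 * π * (n * x))) / π ^ 2 := by
    rw [integral_div, integral_sub (integrable_const 1) (hcos_int n), setIntegral_const,
      smul_eq_mul, mul_one]
  calc ENNReal.ofReal (volume.real A / (2 * π ^ 2))
      ≤ ENNReal.ofReal (∫ x in A, (1 - cos (2 * π * (n * x))) / π ^ 2) := by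
        rw [hint, ← div_div]
        gcongr
        linarith
    _ = ∫⁻ x in A, ENNReal.ofReal ((1 - cos (2 * π * (n * x))) / π ^ 2) :=
        ofReal_integral_eq_lintegral_ofReal (((integrable_const 1).sub (hcos_int n)).div_const _)
          (ae_of_all _ fun x => div_nonneg (sub_nonneg.2 (cos_le_one _)) (sq_nonneg π))
    _ ≤ ∫⁻ x in A, ENNReal.ofReal (nintDist (n * x)) :=
        lintegral_mono fun x => ENNReal.ofReal_le_ofReal <|
          (div_le_iff₀' (by positivity)).2 (one_sub_cos_two_pi_mul_le _)

lemma ENNReal.tsum_ofReal_mul_eq_top {a : ℕ → ℝ} {b : ℕ → ℝ≥0∞} {c : ℝ≥0∞}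
    (ha₀ : ∀ n, 0 ≤ a n) (ha : ¬ Summable a) (hc : c ≠ 0) (hb : ∀ᶠ n in atTop, c ≤ b n) :
    ∑' n, ENNReal.ofReal (a n) * b n = ⊤ := by
  obtain ⟨n₀, hn₀⟩ := eventually_atTop.1 hb
  have htail : ∑' k, ENNReal.ofReal (a (k + n₀)) = ⊤ := by
    by_contra hne
    exact ha <| (summable_nat_add_iff n₀).1 <|
      (ENNReal.summable_toReal hne).congr fun k => ENNReal.toReal_ofReal (ha₀ _)
  refine top_unique ?_
  calc ⊤ = ∑' k, ENNReal.ofReal (a (k + n₀)) * c := by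
        rw [ENNReal.tsum_mul_right, htail, ENNReal.top_mul hc]
    _ ≤ ∑' k, ENNReal.ofReal (a (k + n₀)) * b (k + n₀) :=
        ENNReal.tsum_le_tsum fun k => mul_le_mul_right (hn₀ _ (Nat.le_add_left _ _)) _
    _ ≤ ∑' n, ENNReal.ofReal (a n) * b n :=
        ENNReal.tsum_comp_le_tsum_of_injective (add_left_injective n₀) _

lemma ae_eq_top_of_forall_setLIntegral_eq_top {α : Type*} [MeasurableSpace α] {μ : Measure α}
    [SigmaFinite μ] {g : α → ℝ≥0∞} (hg : Measurable g)
    (h : ∀ A, MeasurableSet A → μ A ≠ 0 → μ A ≠ ⊤ → ∫⁻ x in A, g x ∂μ = ⊤) :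
    ∀ᵐ x ∂μ, g x = ⊤ := by
  have hcover : {x | ¬ g x = ⊤} ⊆ ⋃ N : ℕ, {x | g x ≤ N} ∩ spanningSets μ N := by
    intro x hx
    obtain ⟨N₁, hN₁⟩ := ENNReal.exists_nat_gt hx
    refine mem_iUnion.2 ⟨max N₁ (spanningSetsIndex μ x), ?_, ?_⟩
    · exact hN₁.le.trans (by exact_mod_cast le_max_left _ _)
    · exact monotone_spanningSets μ (le_max_right _ _) (mem_spanningSetsIndex μ x)
  refine ae_iff.2 (measure_mono_null hcover (measure_iUnion_null fun N => ?_))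
  have hmeas : MeasurableSet ({x | g x ≤ N} ∩ spanningSets μ N) :=
    (measurableSet_le hg measurable_const).inter (measurableSet_spanningSets μ N)
  have hfin : μ ({x | g x ≤ N} ∩ spanningSets μ N) ≠ ⊤ :=
    ((measure_mono inter_subset_right).trans_lt (measure_spanningSets_lt_top μ N)).ne
  by_contra hpos
  refine ne_top_of_le_ne_top (ENNReal.mul_ne_top (ENNReal.natCast_ne_top N) hfin)
    ?_ (h _ hmeas hpos hfin)
  exact (setLIntegral_mono measurable_const fun x hx => hx.1).trans_eq (setLIntegral_const _ _)

theorem stmt13 (E : Set ℝ) (hE : IsNSet E) : volume E = 0 := by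
  obtain ⟨a, ha₀, ha, hsum⟩ := hE
  have hterm (n : ℕ) : Measurable fun x : ℝ => ENNReal.ofReal (a n * nintDist (n * x)) :=
    ((measurable_nintDist.comp (measurable_const_mul _)).const_mul _).ennreal_ofReal
  have hdiv : ∀ᵐ x, ∑' n : ℕ, ENNReal.ofReal (a n * nintDist (n * x)) = ⊤ := by
    refine ae_eq_top_of_forall_setLIntegral_eq_top (Measurable.tsum hterm)
      fun A hA hA₀ hA_top => ?_
    have hc : ENNReal.ofReal (volume.real A / (2 * π ^ 2)) ≠ 0 :=
      (ENNReal.ofReal_pos.2 (div_pos (ENNReal.toReal_pos hA₀ hA_top) (by positivity))).ne'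
    rw [lintegral_tsum fun n => (hterm n).aemeasurable]
    simp_rw [ENNReal.ofReal_mul (ha₀ _), lintegral_const_mul' _ _ ENNReal.ofReal_ne_top]
    exact ENNReal.tsum_ofReal_mul_eq_top ha₀ ha hc
      (eventually_le_setLIntegral_nintDist_nat_mul hA hA_top)
  exact measure_mono_null (fun x hx => (hsum x hx).tsum_ofReal_ne_top) (ae_iff.1 hdiv)
end

section
/- Every Arbault set has Lebesgue measure zero. -/
open MeasureTheory Filter Set

/-!
On a unit interval `[m, m + 1]` the set `{x | ‖n x‖ ≤ ε}` is covered by the `n + 1` intervals of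
length `2ε/n` centred at the points `j/n`, so its measure is at most `4ε`, uniformly in `n ≥ 1`.
A point of an Arbault set lies in this set for `n = n_k` for all large `k`, so `E ∩ [m, m + 1]`
is contained in the lim inf of these sets and has measure at most `4ε`. Let `ε → 0` and take the
union over `m`.
-/

theorem MeasureTheory.measure_liminf_atTop_le_of_frequently_le {α : Type*} [MeasurableSpace α]
    {μ : Measure α} {s : ℕ → Set α} {c : ENNReal} (h : ∃ᶠ k in atTop, μ (s k) ≤ c) :
    μ (liminf s atTop) ≤ c := by
  have hmono : Monotone fun N => ⋂ k ≥ N, s k :=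
    fun N N' hN => biInter_mono (fun k hk => hN.trans hk) fun _ _ => subset_rfl
  rw [liminf_eq_iSup_iInf_of_nat]
  change μ (⋃ N, ⋂ k ≥ N, s k) ≤ c
  rw [hmono.measure_iUnion]
  refine iSup_le fun N => ?_
  obtain ⟨k, hk, hNk⟩ := (h.and_eventually (eventually_ge_atTop N)).exists
  exact (measure_mono (biInter_subset_of_mem hNk)).trans hk

theorem round_mem_Icc_of_mem_Icc {α : Type*} [Field α] [LinearOrder α] [IsStrictOrderedRing α]
    [FloorRing α] {x : α} {a b : ℤ} (hx : x ∈ Icc (a : α) b) : round x ∈ Icc a b := by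
  have hmono : Monotone (round : α → ℤ) := fun y z h => by
    rw [round_eq, round_eq]
    exact Int.floor_mono (by linarith)
  exact ⟨by simpa only [round_intCast] using hmono hx.1,
    by simpa only [round_intCast] using hmono hx.2⟩

theorem nintDist_le_inter_Icc_subset (n : ℕ) (hn : 0 < n) (ε : ℝ) (m : ℤ) :
    {x : ℝ | nintDist (n * x) ≤ ε} ∩ Icc (m : ℝ) (m + 1) ⊆
      ⋃ j ∈ Finset.Icc ((n : ℤ) * m) (n * m + n), Icc ((j - ε) / n) ((j + ε) / n) := by
  rintro x ⟨hx, hxm, hxm'⟩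
  have hn' : (0 : ℝ) < n := by exact_mod_cast hn
  have hj := abs_le.mp (show |n * x - round (n * x : ℝ)| ≤ ε from hx)
  refine mem_iUnion₂.2 ⟨round (n * x : ℝ), Finset.mem_Icc.2 (round_mem_Icc_of_mem_Icc ?_), ?_, ?_⟩
  · push_cast
    constructor <;> nlinarith
  · rw [div_le_iff₀ hn']; linarith
  · rw [le_div_iff₀ hn']; linarith

theorem volume_nintDist_le_inter_Icc_le (n : ℕ) (hn : 0 < n) {ε : ℝ} (hε : 0 ≤ ε) (m : ℤ) :
    volume ({x : ℝ | nintDist (n * x) ≤ ε} ∩ Icc (m : ℝ) (m + 1)) ≤ ENNReal.ofReal (4 * ε) := by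
  have hn' : (1 : ℝ) ≤ n := by exact_mod_cast hn
  have hcard : (Finset.Icc ((n : ℤ) * m) (n * m + n)).card = n + 1 := by
    rw [Int.card_Icc]; omega
  calc _ ≤ ∑ j ∈ Finset.Icc ((n : ℤ) * m) (n * m + n),
        volume (Icc (((j : ℝ) - ε) / n) ((j + ε) / n)) :=
        (measure_mono (nintDist_le_inter_Icc_subset n hn ε m)).trans
          (measure_biUnion_finset_le _ _)
    _ = ENNReal.ofReal ((n + 1) * (2 * ε / n)) := by
        rw [Finset.sum_congr rfl fun j _ => by rw [Real.volume_Icc, ← sub_div, add_sub_sub_cancel],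
          Finset.sum_const, hcard, nsmul_eq_mul, ← ENNReal.ofReal_natCast,
          ← ENNReal.ofReal_mul (by positivity)]
        congr 1
        push_cast
        ring
    _ ≤ ENNReal.ofReal (4 * ε) := by
        refine ENNReal.ofReal_le_ofReal ?_
        rw [mul_div_assoc', div_le_iff₀ (by positivity)]
        nlinarith

theorem IsArbault.volume_inter_Icc_le {E : Set ℝ} (hE : IsArbault E) (m : ℤ) {ε : ℝ}
    (hε : 0 < ε) : volume (E ∩ Icc (m : ℝ) (m + 1)) ≤ ENNReal.ofReal (4 * ε) := by
  obtain ⟨n, hn, hlim⟩ := hE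
  calc volume (E ∩ Icc (m : ℝ) (m + 1))
      ≤ volume (liminf (fun k => {x : ℝ | nintDist (n k * x) ≤ ε} ∩ Icc (m : ℝ) (m + 1))
          atTop) := by
        refine measure_mono fun x ⟨hxE, hxI⟩ => mem_liminf_iff_eventually_mem.2 ?_
        exact ((hlim x hxE).eventually (eventually_le_nhds hε)).mono fun k hk => ⟨hk, hxI⟩
    _ ≤ ENNReal.ofReal (4 * ε) := by
        refine measure_liminf_atTop_le_of_frequently_le <|
          (eventually_gt_atTop 0).frequently.mono fun k hk => ?_
        exact volume_nintDist_le_inter_Icc_le _ (hk.trans_le hn.le_apply) hε.le m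

theorem IsArbault.volume_inter_Icc_eq_zero {E : Set ℝ} (hE : IsArbault E) (m : ℤ) :
    volume (E ∩ Icc (m : ℝ) (m + 1)) = 0 := by
  have hlim : Tendsto (fun ε : ℝ => ENNReal.ofReal (4 * ε)) (nhdsWithin 0 (Ioi 0)) (nhds 0) := by
    have := ((ENNReal.continuous_ofReal.comp (continuous_const_mul 4)).tendsto 0).mono_left
      (nhdsWithin_le_nhds (s := Ioi 0))
    simpa only [Function.comp_def, mul_zero, ENNReal.ofReal_zero] using this
  exact nonpos_iff_eq_zero.1 <| ge_of_tendsto hlim <|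
    eventually_mem_nhdsWithin.mono fun ε hε => hE.volume_inter_Icc_le m hε

theorem stmt14 (E : Set ℝ) (hE : IsArbault E) : volume E = 0 := by
  have hcover : E = ⋃ m : ℤ, E ∩ Icc (m : ℝ) (m + 1) := by
    rw [← inter_iUnion, iUnion_Icc_intCast, inter_univ]
  rw [hcover]
  exact measure_iUnion_null hE.volume_inter_Icc_eq_zero
end

section
/- Every Dirichlet set is meager and has Lebesgue measure zero. -/
open MeasureTheory Filter Set

/-!
Reducing modulo `1`, a point `x` of a Dirichlet set lies in the preimage of the closed set
`S = ⋂ k, {y ∈ ℝ/ℤ | ‖n_k • y‖ ≤ 2⁻ᵏ}`. Multiplication by `N ≠ 0` preserves Haar measure on the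
circle, so the `k`-th set has measure at most `2 · 2⁻ᵏ` and `S` is null. Its preimage in `ℝ` is then
a closed null set, hence nowhere dense.
-/

lemma nintDist_natCast_mul (N : ℕ) (x : ℝ) : nintDist (N * x) = ‖N • (x : UnitAddCircle)‖ := by
  rw [nintDist, ← UnitAddCircle.norm_eq, ← AddCircle.coe_nsmul, nsmul_eq_mul]

namespace AddCircle

variable {T : ℝ}

def dirichletSet (n : ℕ → ℕ) : Set (AddCircle T) := ⋂ k, {y | ‖n k • y‖ ≤ (1 / 2) ^ k}

lemma isClosed_dirichletSet (n : ℕ → ℕ) : IsClosed (dirichletSet (T := T) n) :=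
  isClosed_iInter fun k => isClosed_le (continuous_norm.comp (continuous_const_smul (n k)))
    continuous_const

variable [hT : Fact (0 < T)]

lemma volume_preimage_coe_eq_zero {U : Set (AddCircle T)} (hU : MeasurableSet U)
    (h : volume U = 0) : volume (((↑) : ℝ → AddCircle T) ⁻¹' U) = 0 := by
  have hcover : ⋃ m : ℤ, Ioc (m • T) (m • T + T) = univ := by
    simpa only [add_zsmul, one_zsmul] using iUnion_Ioc_zsmul hT.out
  rw [← inter_univ (_ ⁻¹' U), ← hcover, inter_iUnion, measure_iUnion_null_iff]
  exact fun m => (add_projection_respects_measure T _ hU).symm.trans h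

lemma volume_setOf_norm_nsmul_le {N : ℕ} (hN : N ≠ 0) (ε : ℝ) :
    volume {y : AddCircle T | ‖N • y‖ ≤ ε} ≤ ENNReal.ofReal (2 * ε) := by
  have hpres := Measure.measurePreserving_zsmul (volume : Measure (AddCircle T))
    (Int.natCast_ne_zero.2 hN)
  calc volume {y : AddCircle T | ‖N • y‖ ≤ ε}
      = volume ((fun y : AddCircle T => (N : ℤ) • y) ⁻¹' Metric.closedBall 0 ε) := by
        congr 1; ext y; simp [natCast_zsmul]
    _ = ENNReal.ofReal (min T (2 * ε)) := by
        rw [hpres.measure_preimage measurableSet_closedBall.nullMeasurableSet, volume_closedBall]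
    _ ≤ ENNReal.ofReal (2 * ε) := ENNReal.ofReal_le_ofReal (min_le_right _ _)

lemma volume_dirichletSet {n : ℕ → ℕ} (hn : ∀ᶠ k in atTop, n k ≠ 0) :
    volume (dirichletSet (T := T) n) = 0 := by
  have htend : Tendsto (fun k : ℕ => ENNReal.ofReal (2 * (1 / 2 : ℝ) ^ k)) atTop (nhds 0) := by
    simpa using ENNReal.tendsto_ofReal ((tendsto_pow_atTop_nhds_zero_of_lt_one
      (by norm_num : (0 : ℝ) ≤ 1 / 2) (by norm_num)).const_mul 2)
  refine le_antisymm (ge_of_tendsto htend (hn.mono fun k hk => ?_)) (zero_le)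
  exact (measure_mono (iInter_subset _ k)).trans (volume_setOf_norm_nsmul_le hk _)

end AddCircle

theorem stmt15 (E : Set ℝ) (hE : IsDirichlet E) :
    IsMeagre E ∧ volume E = 0 := by
  obtain ⟨n, hn, hE⟩ := hE
  set C : Set ℝ := (↑) ⁻¹' AddCircle.dirichletSet (T := 1) n
  have hEC : E ⊆ C := fun x hx =>
    mem_iInter.2 fun k => (nintDist_natCast_mul (n k) x).symm.trans_le (hE x hx k)
  have hC : volume C = 0 := AddCircle.volume_preimage_coe_eq_zero
    (AddCircle.isClosed_dirichletSet n).measurableSet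
    (AddCircle.volume_dirichletSet (hn.tendsto_atTop.eventually_ne_atTop 0))
  have hCclosed : IsClosed C := (AddCircle.isClosed_dirichletSet n).preimage continuous_quotient_mk'
  exact ⟨(IsNowhereDense.of_isClosed_null hCclosed hC).isMeagre.mono hEC, measure_mono_null hEC hC⟩
end
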